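/- Let I = (K_n^*, s, t, c, Q) be a QSPP instance with n ≥ 5, c = 0, and q_{ef} = 0 for every pair of arcs not contained together in any s-t path. If I is linearizable, then CP_k ≤ (n−k)·((k−2)/(k−3))·CP_{k−1} for every k = 4, …, n−1. -/

import Mathlib

/-- An `s`-`t` path in the digraph on vertex type `V` with arc relation `A`,
represented as the list of its (distinct) vertices. -/
def IsPath {V : Type*} (A : V → V → Prop) (s t : V) (P : List V) : Prop :=
  2 ≤ P.length ∧ P.head? = some s ∧ P.getLast? = some t ∧ P.Nodup ∧ P.Chain' A

/-- The arcs traversed by a path, as the list of ordered pairs of consecutive vertices. -/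
def arcsOf {V : Type*} (P : List V) : List (V × V) :=
  P.zip P.tail

/-- Linear cost `C(P,c)` of a path. -/
noncomputable def linCost {V : Type*} (c : V × V → ℝ) (P : List V) : ℝ :=
  ((arcsOf P).map c).sum

/-- Total (quadratic) cost `C(P,c,Q)` of a path: the sum of the interaction costs over all
ordered pairs of arcs of `P` plus the sum of the linear costs of the arcs of `P`. -/
noncomputable def cost {V : Type*} (c : V × V → ℝ) (Q : V × V → V × V → ℝ)
    (P : List V) : ℝ :=
  ((arcsOf P).map fun e => ((arcsOf P).map fun f => Q e f).sum).sum + linCost c P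

/-- A QSPP instance `(G,s,t,c,Q)` is linearizable if there is a nonnegative cost vector `c'`
such that `C(P,c,Q) = C(P,c')` for every `s`-`t` path `P`. -/
def Linearizable {V : Type*} (A : V → V → Prop) (s t : V) (c : V × V → ℝ)
    (Q : V × V → V × V → ℝ) : Prop :=
  ∃ c' : V × V → ℝ, (∀ e, 0 ≤ c' e) ∧
    ∀ P, IsPath A s t P → cost c Q P = linCost c' P

/-- The arc relation of the complete symmetric digraph `K_n^*` on vertices `1,…,n`
with source `1` and target `n`, from which the incoming arcs of the source, the
outgoing arcs of the target and the arc from source to target have been removed. -/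
def knArc (n : ℕ) : ℕ → ℕ → Prop := fun i j =>
  1 ≤ i ∧ i ≤ n ∧ 1 ≤ j ∧ j ≤ n ∧ i ≠ j ∧ j ≠ 1 ∧ i ≠ n ∧ ¬(i = 1 ∧ j = n)

/-- `CP_k`: the total cost (with zero linear costs) of all `s`-`t` paths of length `k`
in `K_n^*`. -/
noncomputable def CPsum (n : ℕ) (Q : ℕ × ℕ → ℕ × ℕ → ℝ) (k : ℕ) : ℝ :=
  ∑ᶠ (P : List ℕ) (_ : IsPath (knArc n) 1 n P ∧ P.length = k + 1),
    cost (fun _ => 0) Q P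

/-!
Linearizability gives a cost vector `c ≥ 0` with `CP_k = ∑_e N_k(e) c(e)`, where `N_k(e)` is the
number of `s`-`t` paths with `k` arcs through the arc `e`, so it suffices to show
`(k - 3) N_k(e) ≤ (n - k)(k - 2) N_{k-1}(e)`. Double count the pairs `(P, P')` in which `P'`
arises from a path `P` with `k` arcs through `e` by deleting an internal vertex that is not an
endpoint of `e`; since `K_n^*` contains every arc between internal vertices, `P'` is again a path
through `e`. Each `P` admits at least `k - 3` such deletions, and each `P'` arises from at most
`(n - k)(k - 2)` paths `P`: one of the `n - k` vertices off `P'` subdivides one of the `k - 2`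
arcs of `P'` other than `e`.
-/

open Finset List

section Arcs

variable {V : Type*}

lemma length_arcsOf (P : List V) : (arcsOf P).length = P.length - 1 := by
  simp only [arcsOf, length_zip, length_tail]
  omega

lemma mem_arcsOf {P : List V} {e : V × V} :
    e ∈ arcsOf P ↔ ∃ j, ∃ h : j + 1 < P.length, (P[j], P[j + 1]) = e := by
  simp only [mem_iff_getElem, arcsOf, getElem_zip, getElem_tail, length_zip, length_tail]
  exact ⟨fun ⟨j, hj, h⟩ => ⟨j, by omega, h⟩, fun ⟨j, hj, h⟩ => ⟨j, by omega, h⟩⟩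

lemma fst_mem_of_mem_arcsOf {P : List V} {e : V × V} (he : e ∈ arcsOf P) : e.1 ∈ P :=
  (of_mem_zip he).1

lemma snd_mem_of_mem_arcsOf {P : List V} {e : V × V} (he : e ∈ arcsOf P) : e.2 ∈ P :=
  mem_of_mem_tail (of_mem_zip he).2

lemma nodup_arcsOf {P : List V} (h : P.Nodup) : (arcsOf P).Nodup := by
  have hsnd : (arcsOf P).map Prod.snd = P.tail := map_snd_zip (by simp)
  exact Nodup.of_map Prod.snd (hsnd ▸ h.sublist (tail_sublist P))

lemma mem_arcsOf_eraseIdx {P : List V} {e : V × V} (he : e ∈ arcsOf P) {i : ℕ}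
    (hi : i < P.length) (h₁ : P[i] ≠ e.1) (h₂ : P[i] ≠ e.2) : e ∈ arcsOf (P.eraseIdx i) := by
  obtain ⟨j, hj, rfl⟩ := mem_arcsOf.1 he
  have hji : j ≠ i := by rintro rfl; exact h₁ rfl
  have hji' : j + 1 ≠ i := by rintro rfl; exact h₂ rfl
  have hlen := length_eraseIdx_add_one hi
  rw [mem_arcsOf]
  by_cases hlt : j < i
  · refine ⟨j, by omega, ?_⟩
    rw [getElem_eraseIdx_of_lt _ hlt, getElem_eraseIdx_of_lt _ (by omega)]
  · refine ⟨j - 1, by omega, ?_⟩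
    rw [getElem_eraseIdx_of_ge _ (by omega), getElem_eraseIdx_of_ge _ (by omega)]
    simp only [Nat.sub_add_cancel (by omega : 1 ≤ j)]

lemma arc_mem_arcsOf_eraseIdx {P : List V} {i : ℕ} (hi : i + 2 < P.length) :
    (P[i], P[i + 2]) ∈ arcsOf (P.eraseIdx (i + 1)) := by
  have hlen := length_eraseIdx_add_one (by omega : i + 1 < P.length)
  rw [mem_arcsOf]
  exact ⟨i, by omega, by rw [getElem_eraseIdx_of_lt _ (by omega), getElem_eraseIdx_of_ge _ le_rfl]⟩

lemma List.Nodup.getElem_notMem_eraseIdx {P : List V} (h : P.Nodup) {i : ℕ} (hi : i < P.length) :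
    P[i] ∉ P.eraseIdx i := by
  rw [mem_eraseIdx_iff_getElem]
  rintro ⟨j, hj, hji, hPj⟩
  exact hji ((h.getElem_inj_iff).1 hPj)

lemma List.Nodup.injOn_eraseIdx {P : List V} (h : P.Nodup) :
    Set.InjOn P.eraseIdx {i | i < P.length} := by
  intro i hi j hj hij
  by_contra hne
  apply h.getElem_notMem_eraseIdx hi
  rw [hij, mem_eraseIdx_iff_getElem]
  exact ⟨i, hi, hne, rfl⟩

lemma IsPath.nodup {A : V → V → Prop} {s t : V} {P : List V} (hP : IsPath A s t P) : P.Nodup :=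
  hP.2.2.2.1

end Arcs

section KnStar

variable {n : ℕ} {P : List ℕ}

theorem isPath_knArc_iff :
    IsPath (knArc n) 1 n P ↔ 3 ≤ P.length ∧ P.head? = some 1 ∧ P.getLast? = some n ∧
      P.Nodup ∧ ∀ v ∈ P, 1 ≤ v ∧ v ≤ n := by
  simp only [IsPath, head?_eq_getElem?, getLast?_eq_getElem?, getElem?_eq_some_iff]
  constructor
  · rintro ⟨hlen, ⟨h0, hs⟩, ⟨hl, ht⟩, hnd, hchain⟩
    have harc := isChain_iff_getElem.1 hchain
    refine ⟨?_, ⟨h0, hs⟩, ⟨hl, ht⟩, hnd, ?_⟩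
    · by_contra hlt
      obtain ⟨-, -, -, -, -, -, -, hst⟩ := harc 0 (by omega)
      exact hst ⟨hs, by simpa [show P.length - 1 = 1 by omega] using ht⟩
    · intro v hv
      obtain ⟨m, hm, rfl⟩ := mem_iff_getElem.1 hv
      by_cases hlast : m + 1 < P.length
      · exact ⟨(harc m hlast).1, (harc m hlast).2.1⟩
      · obtain ⟨m, rfl⟩ : ∃ m', m = m' + 1 := ⟨m - 1, by omega⟩
        exact ⟨(harc m hm).2.2.1, (harc m hm).2.2.2.1⟩
  · rintro ⟨hlen, ⟨h0, hs⟩, ⟨hl, ht⟩, hnd, hbound⟩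
    refine ⟨by omega, ⟨h0, hs⟩, ⟨hl, ht⟩, hnd, isChain_iff_getElem.2 fun j hj => ?_⟩
    have inj : ∀ a b (ha : a < P.length) (hb : b < P.length), P[a] = P[b] → a = b :=
      fun a b ha hb => hnd.getElem_inj_iff.1
    refine ⟨(hbound _ (getElem_mem _)).1, (hbound _ (getElem_mem _)).2,
      (hbound _ (getElem_mem _)).1, (hbound _ (getElem_mem _)).2, fun h => ?_, fun h => ?_,
      fun h => ?_, fun ⟨h₁, h₂⟩ => ?_⟩
    · exact absurd (inj _ _ _ _ h) (by omega)
    · exact absurd (inj _ _ _ _ (h.trans hs.symm)) (by omega)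
    · exact absurd (inj _ _ _ _ (h.trans ht.symm)) (by omega)
    · have := inj _ _ _ _ (h₁.trans hs.symm)
      have := inj _ _ _ _ (h₂.trans ht.symm)
      omega

lemma IsPath.eraseIdx (hP : IsPath (knArc n) 1 n P) (hlen : 4 ≤ P.length) {i : ℕ}
    (hi₀ : 0 < i) (hi : i + 1 < P.length) : IsPath (knArc n) 1 n (P.eraseIdx i) := by
  obtain ⟨-, hs, ht, hnd, hbound⟩ := isPath_knArc_iff.1 hP
  have hlen' := length_eraseIdx_add_one (by omega : i < P.length)
  refine isPath_knArc_iff.2 ⟨by omega, ?_, ?_, hnd.eraseIdx i,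
    fun v hv => hbound v (mem_of_mem_eraseIdx hv)⟩
  · rwa [head?_eq_getElem?, getElem?_eraseIdx_of_lt hi₀, ← head?_eq_getElem?]
  · rwa [getLast?_eq_getElem?, getElem?_eraseIdx_of_ge (by omega),
      show (P.eraseIdx i).length - 1 + 1 = P.length - 1 by omega, ← getLast?_eq_getElem?]

lemma IsPath.mem_Icc (hP : IsPath (knArc n) 1 n P) {v : ℕ} (hv : v ∈ P) : v ∈ Icc 1 n :=
  Finset.mem_Icc.2 ((isPath_knArc_iff.1 hP).2.2.2.2 v hv)

end KnStar

lemma List.finite_setOf_length_eq_forall_mem {α : Type*} {s : Set α} (hs : s.Finite) (m : ℕ) :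
    {l : List α | l.length = m ∧ ∀ x ∈ l, x ∈ s}.Finite := by
  have := hs.to_subtype
  refine ((List.finite_length_eq s m).image (List.map Subtype.val)).subset ?_
  rintro l ⟨hl, hmem⟩
  exact ⟨l.pmap Subtype.mk hmem, by simp [hl], by simp [map_pmap]⟩

lemma finite_setOf_isPath (n k : ℕ) :
    {P | IsPath (knArc n) 1 n P ∧ P.length = k + 1}.Finite :=
  (List.finite_setOf_length_eq_forall_mem (Icc 1 n).finite_toSet (k + 1)).subset
    fun _ ⟨hP, hl⟩ => ⟨hl, fun _ hv => mem_coe.2 (hP.mem_Icc hv)⟩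

noncomputable def knPaths (n k : ℕ) : Finset (List ℕ) :=
  (finite_setOf_isPath n k).toFinset

lemma mem_knPaths {n k : ℕ} {P : List ℕ} :
    P ∈ knPaths n k ↔ IsPath (knArc n) 1 n P ∧ P.length = k + 1 :=
  Set.Finite.mem_toFinset _

lemma CPsum_eq_sum (n : ℕ) (Q : ℕ × ℕ → ℕ × ℕ → ℝ) (k : ℕ) :
    CPsum n Q k = ∑ P ∈ knPaths n k, cost (fun _ => 0) Q P :=
  finsum_mem_eq_finite_toFinset_sum _ _

lemma sum_linCost_eq_sum_card {V : Type*} [DecidableEq V] {S : Finset (List V)}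
    {E : Finset (V × V)} (hS : ∀ P ∈ S, P.Nodup) (hE : ∀ P ∈ S, ∀ e ∈ arcsOf P, e ∈ E)
    (c : V × V → ℝ) :
    ∑ P ∈ S, linCost c P = ∑ e ∈ E, (#{P ∈ S | e ∈ arcsOf P} : ℝ) * c e := by
  calc ∑ P ∈ S, linCost c P = ∑ P ∈ S, ∑ e ∈ (arcsOf P).toFinset, c e :=
        sum_congr rfl fun P hP => (List.sum_toFinset c (nodup_arcsOf (hS P hP))).symm
    _ = ∑ e ∈ E, ∑ P ∈ S with e ∈ arcsOf P, c e :=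
        sum_comm' fun P e => by
          simp only [List.mem_toFinset, Finset.mem_filter]
          exact ⟨fun h => ⟨h, hE P h.1 e h.2⟩, fun h => h.1⟩
    _ = _ := by simp only [sum_const, nsmul_eq_mul]

noncomputable def pathsThrough (n k : ℕ) (e : ℕ × ℕ) : Finset (List ℕ) :=
  {P ∈ knPaths n k | e ∈ arcsOf P}

lemma mem_pathsThrough {n k : ℕ} {e : ℕ × ℕ} {P : List ℕ} :
    P ∈ pathsThrough n k e ↔ (IsPath (knArc n) 1 n P ∧ P.length = k + 1) ∧ e ∈ arcsOf P := by
  rw [pathsThrough, Finset.mem_filter, mem_knPaths]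

/-- For duplicate-free `P`: the internal positions whose vertex is not an endpoint of `e`. -/
def removableIdx (P : List ℕ) (e : ℕ × ℕ) : Finset ℕ :=
  Icc 1 (P.length - 2) \ {P.idxOf e.1, P.idxOf e.2}

lemma le_card_removableIdx (P : List ℕ) (e : ℕ × ℕ) : P.length - 4 ≤ #(removableIdx P e) := by
  have hsdiff := le_card_sdiff {P.idxOf e.1, P.idxOf e.2} (Icc 1 (P.length - 2))
  have hpair : #{P.idxOf e.1, P.idxOf e.2} ≤ 2 := card_le_two
  rw [Nat.card_Icc] at hsdiff
  rw [removableIdx]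
  omega

lemma pos_and_add_one_lt_of_mem_removableIdx {P : List ℕ} {e : ℕ × ℕ} {i : ℕ}
    (hi : i ∈ removableIdx P e) : 0 < i ∧ i + 1 < P.length := by
  simp only [removableIdx, mem_sdiff, Finset.mem_Icc] at hi
  omega

lemma getElem_ne_of_mem_removableIdx {P : List ℕ} (hnd : P.Nodup) {e : ℕ × ℕ} {i : ℕ}
    (hi : i ∈ removableIdx P e) (hlt : i < P.length) : P[i] ≠ e.1 ∧ P[i] ≠ e.2 := by
  simp only [removableIdx, mem_sdiff, mem_insert, Finset.mem_singleton, not_or] at hi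
  obtain ⟨-, hi₁, hi₂⟩ := hi
  exact ⟨fun h => hi₁ (h ▸ hnd.idxOf_getElem i hlt).symm,
    fun h => hi₂ (h ▸ hnd.idxOf_getElem i hlt).symm⟩

def ErasesTo (e : ℕ × ℕ) (P P' : List ℕ) : Prop :=
  ∃ i ∈ removableIdx P e, P.eraseIdx i = P'

instance (e : ℕ × ℕ) : DecidableRel (ErasesTo e) :=
  fun _ _ => inferInstanceAs (Decidable (∃ _ ∈ _, _))

section DoubleCounting

variable {n k : ℕ} {e : ℕ × ℕ}

lemma le_card_bipartiteAbove_erasesTo (hk : 3 ≤ k) {P : List ℕ}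
    (hP : P ∈ pathsThrough n k e) :
    k - 3 ≤ #((pathsThrough n (k - 1) e).bipartiteAbove (ErasesTo e) P) := by
  obtain ⟨⟨hpath, hlen⟩, he⟩ := mem_pathsThrough.1 hP
  have hnd := hpath.nodup
  refine (hlen ▸ le_card_removableIdx P e).trans (card_le_card_of_injOn P.eraseIdx ?_ ?_)
  · intro i hi
    obtain ⟨hi₀, hlt⟩ := pos_and_add_one_lt_of_mem_removableIdx hi
    obtain ⟨h₁, h₂⟩ := getElem_ne_of_mem_removableIdx hnd hi (by omega)
    refine (mem_bipartiteAbove _).2 ⟨mem_pathsThrough.2 ⟨⟨hpath.eraseIdx (by omega) hi₀ hlt, ?_⟩,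
      mem_arcsOf_eraseIdx he (by omega) h₁ h₂⟩, i, hi, rfl⟩
    have := length_eraseIdx_add_one (by omega : i < P.length)
    omega
  · exact hnd.injOn_eraseIdx.mono fun i hi => show i < P.length by
      have := pos_and_add_one_lt_of_mem_removableIdx hi
      omega

lemma card_bipartiteBelow_erasesTo_le (hk : 1 ≤ k) {P' : List ℕ}
    (hP' : P' ∈ pathsThrough n (k - 1) e) :
    #((pathsThrough n k e).bipartiteBelow (ErasesTo e) P') ≤ (n - k) * (k - 2) := by
  obtain ⟨⟨hpath', hlen'⟩, he'⟩ := mem_pathsThrough.1 hP'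
  have hnd' := hpath'.nodup
  calc _ ≤ #((Icc 1 n \ P'.toFinset) ×ˢ ((arcsOf P').toFinset.erase e)) :=
        card_le_card_of_surjOn (fun x => P'.insertIdx (P'.idxOf x.2.1 + 1) x.1) ?_
    _ = (n - k) * (k - 2) := by
        rw [card_product, card_sdiff_of_subset fun v hv => hpath'.mem_Icc (mem_toFinset.1 hv),
          card_erase_of_mem (mem_toFinset.2 he'), toFinset_card_of_nodup hnd',
          toFinset_card_of_nodup (nodup_arcsOf hnd'), length_arcsOf, Nat.card_Icc]
        congr 1 <;> omega
  intro P hP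
  obtain ⟨hPk, i, hi, rfl⟩ := (mem_bipartiteBelow _).1 hP
  obtain ⟨⟨hpath, hlen⟩, he⟩ := mem_pathsThrough.1 hPk
  have hnd := hpath.nodup
  obtain ⟨hi₀, hlt⟩ := pos_and_add_one_lt_of_mem_removableIdx hi
  obtain ⟨-, h₂⟩ := getElem_ne_of_mem_removableIdx hnd hi (by omega)
  obtain ⟨j, rfl⟩ : ∃ j, i = j + 1 := ⟨i - 1, by omega⟩
  have harc : (P[j], P[j + 2]) ≠ e := by
    rintro rfl
    obtain ⟨m, hm, hme⟩ := mem_arcsOf.1 he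
    obtain rfl : m = j := hnd.getElem_inj_iff.1 (congrArg Prod.fst hme)
    exact h₂ (congrArg Prod.snd hme)
  have hidx : (P.eraseIdx (j + 1)).idxOf P[j] = j := by
    have hlen := length_eraseIdx_add_one (by omega : j + 1 < P.length)
    rw [← getElem_eraseIdx_of_lt (l := P) (i := j + 1) (by omega) (by omega)]
    exact (hnd.eraseIdx _).idxOf_getElem j _
  refine ⟨(P[j + 1], (P[j], P[j + 2])), mem_product.2 ⟨mem_sdiff.2 ⟨hpath.mem_Icc (getElem_mem _),
    fun h => hnd.getElem_notMem_eraseIdx _ (mem_toFinset.1 h)⟩,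
    mem_erase.2 ⟨harc, mem_toFinset.2 (arc_mem_arcsOf_eraseIdx hlt)⟩⟩, ?_⟩
  simp only [hidx, insertIdx_eraseIdx_getElem]

theorem card_pathsThrough_mul_le (hk : 3 ≤ k) (e : ℕ × ℕ) :
    #(pathsThrough n k e) * (k - 3) ≤ #(pathsThrough n (k - 1) e) * ((n - k) * (k - 2)) :=
  card_mul_le_card_mul (ErasesTo e) (fun _ hP => le_card_bipartiteAbove_erasesTo hk hP)
    fun _ hP' => card_bipartiteBelow_erasesTo_le (by omega) hP'

end DoubleCounting

lemma card_pathsThrough_le {n k : ℕ} (hk : 4 ≤ k) (hkn : k ≤ n) (e : ℕ × ℕ) :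
    (#(pathsThrough n k e) : ℝ) ≤
      ((n : ℝ) - k) * (((k : ℝ) - 2) / ((k : ℝ) - 3)) * #(pathsThrough n (k - 1) e) := by
  have hnat := card_pathsThrough_mul_le (n := n) (by omega : 3 ≤ k) e
  have hreal := (Nat.cast_le (α := ℝ)).2 hnat
  push_cast [Nat.cast_sub (by omega : 3 ≤ k), Nat.cast_sub hkn, Nat.cast_sub (by omega : 2 ≤ k)]
    at hreal
  have hk3 : (0 : ℝ) < (k : ℝ) - 3 := by
    have : (4 : ℝ) ≤ k := by exact_mod_cast hk
    linarith
  rw [show ((n : ℝ) - k) * (((k : ℝ) - 2) / ((k : ℝ) - 3)) * #(pathsThrough n (k - 1) e) =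
    #(pathsThrough n (k - 1) e) * (((n : ℝ) - k) * ((k : ℝ) - 2)) / ((k : ℝ) - 3) by ring,
    le_div_iff₀ hk3]
  exact hreal

theorem stmt_11_general (n : ℕ) (Q : ℕ × ℕ → ℕ × ℕ → ℝ)
    (hlin : Linearizable (knArc n) 1 n (fun _ => 0) Q) :
    ∀ k, 4 ≤ k → k ≤ n - 1 →
      CPsum n Q k ≤
        ((n : ℝ) - k) * (((k : ℝ) - 2) / ((k : ℝ) - 3)) * CPsum n Q (k - 1) := by
  obtain ⟨c, hc₀, hc⟩ := hlin
  intro k hk hkn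
  have hCP (m : ℕ) :
      CPsum n Q m = ∑ e ∈ Icc 1 n ×ˢ Icc 1 n, (#(pathsThrough n m e) : ℝ) * c e := by
    rw [CPsum_eq_sum, sum_congr rfl fun P hP => hc P (mem_knPaths.1 hP).1]
    refine sum_linCost_eq_sum_card (fun P hP => (mem_knPaths.1 hP).1.nodup) (fun P hP e he => ?_) c
    have hpath := (mem_knPaths.1 hP).1
    exact mem_product.2 ⟨hpath.mem_Icc (fst_mem_of_mem_arcsOf he),
      hpath.mem_Icc (snd_mem_of_mem_arcsOf he)⟩
  rw [hCP, hCP, mul_sum]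
  refine sum_le_sum fun e _ => ?_
  rw [← mul_assoc]
  exact mul_le_mul_of_nonneg_right (card_pathsThrough_le hk (by omega) e) (hc₀ e)

/-- On `K_n^*` (`n ≥ 5`): if the instance is linearizable then
`CP_k ≤ (n-k)·((k-2)/(k-3))·CP_{k-1}` for every `k = 4,…,n-1`. -/
theorem stmt_11 (n : ℕ) (hn : 5 ≤ n) (Q : ℕ × ℕ → ℕ × ℕ → ℝ)
    (hQ0 : ∀ e f, 0 ≤ Q e f) (hQs : ∀ e f, Q e f = Q f e) (hQd : ∀ e, Q e e = 0)
    (hQpath : ∀ e f,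
      (¬ ∃ P, IsPath (knArc n) 1 n P ∧ e ∈ arcsOf P ∧ f ∈ arcsOf P) → Q e f = 0)
    (hlin : Linearizable (knArc n) 1 n (fun _ => 0) Q) :
    ∀ k, 4 ≤ k → k ≤ n - 1 →
      CPsum n Q k ≤
        ((n : ℝ) - k) * (((k : ℝ) - 2) / ((k : ℝ) - 3)) * CPsum n Q (k - 1) :=
  stmt_11_general n Q hlin
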